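/- arXiv:1812.06165 — 2 statements merged into one kernel-verified Lean document; each statement's English description precedes it below -/
import Mathlib

section
/- Let A ∈ ℝ^{m×n}, b ∈ ℝ^m, L ∈ ℝ^{s×n} with full column rank, and W_1,…,W_k ∈ ℝ^{m×ℓ} arbitrary. Write A_i = W_iᵀA, b_i = W_iᵀb. Let Λ_1,…,Λ_k be reals with λ_j := Σ_{i=1}^{j} Λ_i > 0 for every j ≤ k. For arbitrary x_0 ∈ ℝ^n define the sampled Tikhonov iterates x_j = x_{j-1} − B_j (A_jᵀ(A_j x_{j-1} − b_j) + Λ_j LᵀL x_{j-1}) where B_j = (λ_j LᵀL + Σ_{i=1}^{j} A_iᵀA_i)^{-1}. Then x_k is the unique minimizer of x ↦ Σ_{i=1}^{k} ‖A_i x − b_i‖² + λ_k ‖L x‖², i.e. x_k = B_k Σ_{i=1}^{k} A_iᵀ b_i, independent of x_0. -/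
/-!
Put `N j = λ_j LᵀL + Σ_{i<j} A_iᵀA_i`, so that `B j = (N j)⁻¹`. Since
`N (j+1) = N j + (A_jᵀA_j + Λ_j LᵀL)`, the sTik step is exactly what carries the normal
equation `N j x_j = Σ_{i<j} A_iᵀ b_i` from `j` to `j + 1`; at `j = 0` it holds for every `x_0`
because `N 0 = 0`. The objective is `z ↦ zᵀ N_k z − 2 ⟪Σ A_iᵀ b_i, z⟫ + const`, and `N k` is
positive definite because `L` has full column rank, so its unique minimizer is the solution
of the normal equation.
-/

open Matrix Finset

namespace Matrix

variable {ι κ σ α : Type*} [Fintype ι]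

theorem mulVec_injective_of_rank_eq_card {K : Type*} [Field K] {M : Matrix κ ι K}
    (h : M.rank = Fintype.card ι) : Function.Injective M.mulVec := by
  rw [mulVec_injective_iff, linearIndependent_iff_card_eq_finrank_span,
    Set.finrank, ← rank_eq_finrank_span_cols, h]

variable [Fintype κ] [Fintype σ]

theorem posDef_transpose_mul_self_of_rank_eq_card {L : Matrix κ ι ℝ}
    (h : L.rank = Fintype.card ι) : (Lᵀ * L).PosDef := by
  simpa using PosDef.conjTranspose_mul_self L (mulVec_injective_of_rank_eq_card h)

theorem sum_sq_mulVec (L : Matrix κ ι ℝ) (z : ι → ℝ) :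
    ∑ p, (L *ᵥ z) p ^ 2 = z ⬝ᵥ (Lᵀ * L) *ᵥ z := by
  rw [← mulVec_mulVec, dotProduct_mulVec, vecMul_transpose]
  simp [dotProduct, sq]

theorem sum_sq_mulVec_sub (C : Matrix κ ι ℝ) (d : κ → ℝ) (z : ι → ℝ) :
    ∑ p, (C *ᵥ z - d) p ^ 2 = z ⬝ᵥ (Cᵀ * C) *ᵥ z - 2 * ((Cᵀ *ᵥ d) ⬝ᵥ z) + d ⬝ᵥ d := by
  have hcross : (Cᵀ *ᵥ d) ⬝ᵥ z = d ⬝ᵥ (C *ᵥ z) := by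
    rw [← vecMul_transpose, transpose_transpose, ← dotProduct_mulVec]
  have hsq (v : κ → ℝ) : ∑ p, v p ^ 2 = v ⬝ᵥ v := by simp [dotProduct, sq]
  rw [hsq, sub_dotProduct, dotProduct_sub, dotProduct_sub, ← hsq (C *ᵥ z), sum_sq_mulVec,
    hcross, dotProduct_comm (C *ᵥ z) d]
  ring

theorem regularized_least_squares_eq_quadratic (s : Finset α) (C : α → Matrix κ ι ℝ)
    (d : α → κ → ℝ) (L : Matrix σ ι ℝ) (μ : ℝ) (z : ι → ℝ) :
    (∑ i ∈ s, ∑ p, (C i *ᵥ z - d i) p ^ 2) + μ * ∑ p, (L *ᵥ z) p ^ 2 =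
      z ⬝ᵥ (μ • (Lᵀ * L) + ∑ i ∈ s, (C i)ᵀ * C i) *ᵥ z
        - 2 * ((∑ i ∈ s, (C i)ᵀ *ᵥ d i) ⬝ᵥ z) + ∑ i ∈ s, d i ⬝ᵥ d i := by
  simp only [sum_sq_mulVec_sub, sum_sq_mulVec, add_mulVec, smul_mulVec, sum_mulVec,
    dotProduct_add, dotProduct_smul, dotProduct_sum, sum_dotProduct, smul_eq_mul,
    sum_add_distrib, sum_sub_distrib, ← mul_sum]
  ring

theorem quadratic_sub_quadratic {M : Matrix ι ι ℝ} (hM : M.IsSymm) {c x : ι → ℝ}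
    (hx : M *ᵥ x = c) (z : ι → ℝ) :
    (z ⬝ᵥ M *ᵥ z - 2 * (c ⬝ᵥ z)) - (x ⬝ᵥ M *ᵥ x - 2 * (c ⬝ᵥ x)) =
      (z - x) ⬝ᵥ M *ᵥ (z - x) := by
  have hsymm : x ⬝ᵥ M *ᵥ z = c ⬝ᵥ z := by
    rw [dotProduct_mulVec, ← hM.eq, vecMul_transpose, hx]
  rw [mulVec_sub, sub_dotProduct, dotProduct_sub, dotProduct_sub, hsymm, hx,
    dotProduct_comm z c, dotProduct_comm x c]
  ring

theorem PosDef.unique_min_of_quadratic {M : Matrix ι ι ℝ} (hM : M.PosDef) {c x : ι → ℝ}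
    (hx : M *ᵥ x = c) (d : ℝ) {g : (ι → ℝ) → ℝ}
    (hg : ∀ z, g z = z ⬝ᵥ M *ᵥ z - 2 * (c ⬝ᵥ z) + d) :
    (∀ z, g x ≤ g z) ∧ ∀ z, (∀ w, g z ≤ g w) → z = x := by
  have hsymm : M.IsSymm := by simpa using hM.isHermitian
  have hgap (z : ι → ℝ) : g z - g x = (z - x) ⬝ᵥ M *ᵥ (z - x) := by
    rw [hg, hg, ← quadratic_sub_quadratic hsymm hx]
    ring
  refine ⟨fun z => ?_, fun z hz => ?_⟩
  · have := hM.posSemidef.dotProduct_mulVec_nonneg (z - x)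
    simp only [star_trivial] at this
    linarith [hgap z]
  · by_contra hne
    have := hM.dotProduct_mulVec_pos (sub_ne_zero.mpr hne)
    simp only [star_trivial] at this
    linarith [hgap z, hz x]

theorem mulVec_eq_sum_of_recursive_update {R : Type*} [CommRing R] [DecidableEq ι]
    {N G : ℕ → Matrix ι ι R} {r x : ℕ → ι → R} {k : ℕ}
    (hN₀ : N 0 = 0) (hN : ∀ j, N (j + 1) = N j + G j)
    (hunit : ∀ j, 0 < j → j ≤ k → IsUnit (N j))
    (hx : ∀ j, x (j + 1) = x j - (N (j + 1))⁻¹ *ᵥ (G j *ᵥ x j - r j)) :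
    ∀ j ≤ k, N j *ᵥ x j = ∑ i ∈ range j, r i := by
  intro j hj
  induction j with
  | zero => simp [hN₀]
  | succ j ih =>
    have hinv : N (j + 1) * (N (j + 1))⁻¹ = 1 :=
      mul_nonsing_inv _ ((isUnit_iff_isUnit_det _).mp (hunit _ j.succ_pos hj))
    rw [hx, mulVec_sub, mulVec_mulVec, hinv, one_mulVec, hN, add_mulVec, sum_range_succ,
      ← ih (by omega)]
    abel

end Matrix

theorem sTik_iterate_is_unique_minimizer_general
    {n s ℓ : ℕ} (k : ℕ) (hk : 0 < k)
    (L : Matrix (Fin s) (Fin n) ℝ) (hL : L.rank = n)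
    (Ai : ℕ → Matrix (Fin ℓ) (Fin n) ℝ)
    (bi : ℕ → Fin ℓ → ℝ)
    (Lam : ℕ → ℝ) (lam : ℕ → ℝ)
    (hlamdef : ∀ j, lam j = ∑ i ∈ Finset.range j, Lam i)
    (hpos : ∀ j, 0 < j → j ≤ k → 0 < lam j)
    (B : ℕ → Matrix (Fin n) (Fin n) ℝ)
    (hB : ∀ j, B j = (lam j • (Lᵀ * L) + ∑ i ∈ Finset.range j, (Ai i)ᵀ * Ai i)⁻¹)
    (x : ℕ → Fin n → ℝ)
    (hx : ∀ j, x (j + 1) =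
      x j - (B (j + 1)).mulVec ((Ai j)ᵀ.mulVec ((Ai j).mulVec (x j) - bi j)
        + Lam j • (Lᵀ * L).mulVec (x j)))
    (f : (Fin n → ℝ) → ℝ)
    (hf : ∀ z, f z = (∑ i ∈ Finset.range k, ∑ p, ((Ai i).mulVec z - bi i) p ^ 2)
        + lam k * ∑ p, (L.mulVec z) p ^ 2) :
    ((∀ z, f (x k) ≤ f z) ∧ (∀ z, (∀ w, f z ≤ f w) → z = x k)) ∧
      x k = (B k).mulVec (∑ i ∈ Finset.range k, (Ai i)ᵀ.mulVec (bi i)) := by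
  set N : ℕ → Matrix (Fin n) (Fin n) ℝ :=
    fun j => lam j • (Lᵀ * L) + ∑ i ∈ range j, (Ai i)ᵀ * Ai i with hN
  have hLL : (Lᵀ * L).PosDef := posDef_transpose_mul_self_of_rank_eq_card (by simpa using hL)
  have hNpos (j : ℕ) (hj : 0 < j) (hjk : j ≤ k) : (N j).PosDef :=
    (hLL.smul (hpos j hj hjk)).add_posSemidef
      (posSemidef_sum _ fun i _ => by simpa using posSemidef_conjTranspose_mul_self (Ai i))
  have hnormal : ∀ j ≤ k, N j *ᵥ x j = ∑ i ∈ range j, (Ai i)ᵀ *ᵥ bi i := by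
    refine mulVec_eq_sum_of_recursive_update (G := fun j => (Ai j)ᵀ * Ai j + Lam j • (Lᵀ * L))
      (by simp [hN, hlamdef]) (fun j => ?_) (fun j hj hjk => (hNpos j hj hjk).isUnit)
      (fun j => ?_)
    · simp only [hN, hlamdef, sum_range_succ, add_smul]
      abel
    · have hgrad : (Ai j)ᵀ *ᵥ (Ai j *ᵥ x j - bi j) + Lam j • (Lᵀ * L) *ᵥ x j =
          ((Ai j)ᵀ * Ai j + Lam j • (Lᵀ * L)) *ᵥ x j - (Ai j)ᵀ *ᵥ bi j := by
        rw [add_mulVec, smul_mulVec, mulVec_sub, mulVec_mulVec]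
        abel
      rw [hx, hB, hgrad]
  have hxk : x k = B k *ᵥ ∑ i ∈ range k, (Ai i)ᵀ *ᵥ bi i := by
    rw [hB, ← hnormal k le_rfl, mulVec_mulVec,
      nonsing_inv_mul _ ((isUnit_iff_isUnit_det _).mp (hNpos k hk le_rfl).isUnit), one_mulVec]
  refine ⟨(hNpos k hk le_rfl).unique_min_of_quadratic (hnormal k le_rfl)
    (∑ i ∈ range k, bi i ⬝ᵥ bi i) fun z => ?_, hxk⟩
  rw [hf, regularized_least_squares_eq_quadratic]

/-- the sampled Tikhonov (`sTik`) iterate `x k` is the unique minimizer of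
`x ↦ Σ_{i=1}^k ‖A_i x − b_i‖² + λ_k‖Lx‖²`, i.e. `x k = B k (Σ A_iᵀ b_i)`,
independent of the initial iterate. -/
theorem sTik_iterate_is_unique_minimizer
    {m n s ℓ : ℕ} (k : ℕ) (hk : 0 < k)
    (A : Matrix (Fin m) (Fin n) ℝ) (b : Fin m → ℝ)
    (L : Matrix (Fin s) (Fin n) ℝ) (hL : L.rank = n)
    (W : ℕ → Matrix (Fin m) (Fin ℓ) ℝ)
    (Ai : ℕ → Matrix (Fin ℓ) (Fin n) ℝ) (hAi : ∀ i, Ai i = (W i)ᵀ * A)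
    (bi : ℕ → Fin ℓ → ℝ) (hbi : ∀ i, bi i = (W i)ᵀ.mulVec b)
    (Lam : ℕ → ℝ) (lam : ℕ → ℝ)
    (hlamdef : ∀ j, lam j = ∑ i ∈ Finset.range j, Lam i)
    (hpos : ∀ j, 0 < j → j ≤ k → 0 < lam j)
    (x0 : Fin n → ℝ)
    (B : ℕ → Matrix (Fin n) (Fin n) ℝ)
    (hB : ∀ j, B j = (lam j • (Lᵀ * L) + ∑ i ∈ Finset.range j, (Ai i)ᵀ * Ai i)⁻¹)
    (x : ℕ → Fin n → ℝ) (hx0 : x 0 = x0)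
    (hx : ∀ j, x (j + 1) =
      x j - (B (j + 1)).mulVec ((Ai j)ᵀ.mulVec ((Ai j).mulVec (x j) - bi j)
        + Lam j • (Lᵀ * L).mulVec (x j)))
    (f : (Fin n → ℝ) → ℝ)
    (hf : ∀ z, f z = (∑ i ∈ Finset.range k, ∑ p, ((Ai i).mulVec z - bi i) p ^ 2)
        + lam k * ∑ p, (L.mulVec z) p ^ 2) :
    ((∀ z, f (x k) ≤ f z) ∧ (∀ z, (∀ w, f z ≤ f w) → z = x k)) ∧
      x k = (B k).mulVec (∑ i ∈ Finset.range k, (Ai i)ᵀ.mulVec (bi i)) :=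
  sTik_iterate_is_unique_minimizer_general k hk L hL Ai bi Lam lam hlamdef hpos B hB x hx f hf
end

section
/- Let A ∈ ℝ^{m×n}, b ∈ ℝ^m, L ∈ ℝ^{s×n} with full column rank, {W_i}_{i=1}^{M} ⊂ ℝ^{m×ℓ} with Σ_{i=1}^{M} W_i W_iᵀ = I_m, and λ > 0. Suppose τ: ℕ → {1,…,M} is a sampling such that for every epoch j, {τ(k)}_{k=jM+1}^{(j+1)M} is a permutation of {1,…,M}. With y_0 = 0 and rrls iterates y_k = y_{k-1} − B_k A_{τ(k)}ᵀ(A_{τ(k)} y_{k-1} − b_{τ(k)}), B_k = (λLᵀL + Σ_{i=1}^{k} A_{τ(i)}ᵀA_{τ(i)})^{-1}, the iterate after the j-th epoch satisfies y_{jM} = (AᵀA + (λ/j) LᵀL)^{-1} Aᵀ b, i.e. y_{jM} is the Tikhonov solution with regularization parameter λ/j. -/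
/-!
The invariant behind recursive least squares: if `G_k = λ LᵀL + Σ_{i<k} C_iᵀ C_i` is
invertible for every `k`, the update `y_{k+1} = y_k - G_{k+1}⁻¹ C_kᵀ (C_k y_k - d_k)` keeps
`G_k y_k = Σ_{i<k} C_iᵀ d_i`, i.e. `y_k` solves the regularized normal equations of the blocks
seen so far. Because `Σ W_i W_iᵀ = 1`, one sweep over all blocks contributes `AᵀA` and `Aᵀb`,
so after `j` epochs `j (AᵀA + (λ/j) LᵀL) y_{jM} = j Aᵀb`.
-/

open Matrix Finset

theorem Matrix.mulVec_injective_of_rank_eq_card_s5 {K m n : Type*} [Field K] [Fintype n]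
    {A : Matrix m n K} (hA : A.rank = Fintype.card n) : Function.Injective A.mulVec :=
  mulVec_injective_iff.2 <| linearIndependent_iff_card_eq_finrank_span.2 <| by
    rw [Set.finrank, ← rank_eq_finrank_span_cols, hA]

theorem Matrix.posDef_transpose_mul_self_of_rank_eq_card_s5 {m n : Type*} [Fintype m] [Fintype n]
    {A : Matrix m n ℝ} (hA : A.rank = Fintype.card n) : (Aᵀ * A).PosDef := by
  simpa using PosDef.conjTranspose_mul_self A (mulVec_injective_of_rank_eq_card_s5 hA)

theorem Matrix.posSemidef_transpose_mul_self {m n : Type*} [Fintype m] [Fintype n]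
    (A : Matrix m n ℝ) : (Aᵀ * A).PosSemidef := by
  simpa using posSemidef_conjTranspose_mul_self A

section RecursiveLeastSquares

variable {R n l : Type*} [CommRing R] [Fintype n] [DecidableEq n] [Fintype l]

theorem Matrix.mulVec_rls_step {G : Matrix n n R} (C : Matrix l n R) (d : l → R) (y : n → R)
    (hG : IsUnit (G + Cᵀ * C)) :
    (G + Cᵀ * C) *ᵥ (y - (G + Cᵀ * C)⁻¹ *ᵥ (Cᵀ *ᵥ (C *ᵥ y - d))) = G *ᵥ y + Cᵀ *ᵥ d := by
  rw [mulVec_sub, mulVec_mulVec, mul_nonsing_inv _ ((isUnit_iff_isUnit_det _).1 hG), one_mulVec,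
    add_mulVec, mulVec_sub, mulVec_mulVec]
  abel

theorem Matrix.mulVec_rls_iterate_eq_sum (G₀ : Matrix n n R) (C : ℕ → Matrix l n R) (d : ℕ → l → R)
    (y : ℕ → n → R) (hunit : ∀ k, IsUnit (G₀ + ∑ i ∈ range k, (C i)ᵀ * C i)) (hy0 : y 0 = 0)
    (hy : ∀ k, y (k + 1) = y k - (G₀ + ∑ i ∈ range (k + 1), (C i)ᵀ * C i)⁻¹ *ᵥ
      ((C k)ᵀ *ᵥ (C k *ᵥ y k - d k))) (k : ℕ) :
    (G₀ + ∑ i ∈ range k, (C i)ᵀ * C i) *ᵥ y k = ∑ i ∈ range k, (C i)ᵀ *ᵥ d i := by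
  induction k with
  | zero => simp [hy0]
  | succ k ih =>
    have hunit' := hunit (k + 1)
    rw [sum_range_succ, ← add_assoc] at hunit' ⊢
    rw [hy k, sum_range_succ, ← add_assoc, mulVec_rls_step _ _ _ hunit', ih, sum_range_succ]

end RecursiveLeastSquares

theorem Finset.sum_range_mul_eq_nsmul_sum {M : Type*} [AddCommMonoid M] {p : ℕ} (τ : ℕ → Fin p)
    (hτ : ∀ j, Function.Bijective fun t : Fin p => τ (j * p + t)) (f : Fin p → M) (j : ℕ) :
    ∑ i ∈ range (j * p), f (τ i) = j • ∑ t, f t := by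
  induction j with
  | zero => simp
  | succ j ih =>
    have hepoch : ∑ i ∈ range p, f (τ (j * p + i)) = ∑ t, f t := by
      rw [← Fin.sum_univ_eq_sum_range (fun i => f (τ (j * p + i)))]
      exact Fintype.sum_bijective _ (hτ j) _ _ fun _ => rfl
    rw [Nat.succ_mul, sum_range_add, ih, hepoch, succ_nsmul]

section BlockSplitting

variable {R m n l ι : Type*} [CommRing R] [Fintype m] [DecidableEq m] [Fintype l] [Fintype ι]
  {W : ι → Matrix m l R}

theorem Matrix.sum_blocks_transpose_mul_self (hW : ∑ i, W i * (W i)ᵀ = 1) (A : Matrix m n R) :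
    ∑ i, ((W i)ᵀ * A)ᵀ * ((W i)ᵀ * A) = Aᵀ * A := by
  calc ∑ i, ((W i)ᵀ * A)ᵀ * ((W i)ᵀ * A) = Aᵀ * (∑ i, W i * (W i)ᵀ) * A := by
        simp only [transpose_mul, transpose_transpose, Matrix.mul_sum, Matrix.sum_mul,
          Matrix.mul_assoc]
    _ = Aᵀ * A := by rw [hW, Matrix.mul_one]

theorem Matrix.sum_blocks_transpose_mulVec [Fintype n] (hW : ∑ i, W i * (W i)ᵀ = 1)
    (A : Matrix m n R) (b : m → R) :
    ∑ i, ((W i)ᵀ * A)ᵀ *ᵥ ((W i)ᵀ *ᵥ b) = Aᵀ *ᵥ b := by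
  calc ∑ i, ((W i)ᵀ * A)ᵀ *ᵥ ((W i)ᵀ *ᵥ b) = (Aᵀ * (∑ i, W i * (W i)ᵀ)) *ᵥ b := by
        simp only [transpose_mul, transpose_transpose, mulVec_mulVec, Matrix.mul_sum, sum_mulVec,
          Matrix.mul_assoc]
    _ = Aᵀ *ᵥ b := by rw [hW, Matrix.mul_one]

end BlockSplitting

theorem rrls_epoch_iterate_general
    {m n s ℓ M : ℕ}
    (A : Matrix (Fin m) (Fin n) ℝ) (b : Fin m → ℝ)
    (L : Matrix (Fin s) (Fin n) ℝ) (hL : L.rank = n)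
    (W : Fin M → Matrix (Fin m) (Fin ℓ) ℝ)
    (hW : ∑ i, W i * (W i)ᵀ = (1 : Matrix (Fin m) (Fin m) ℝ))
    (lam : ℝ) (hlam : 0 < lam)
    (τ : ℕ → Fin M)
    (hτ : ∀ j : ℕ, Function.Bijective (fun t : Fin M => τ (j * M + (t : ℕ))))
    (Ai : Fin M → Matrix (Fin ℓ) (Fin n) ℝ) (hAi : ∀ i, Ai i = (W i)ᵀ * A)
    (bi : Fin M → Fin ℓ → ℝ) (hbi : ∀ i, bi i = (W i)ᵀ.mulVec b)
    (B : ℕ → Matrix (Fin n) (Fin n) ℝ)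
    (hB : ∀ j, B j = (lam • (Lᵀ * L) + ∑ i ∈ Finset.range j, (Ai (τ i))ᵀ * Ai (τ i))⁻¹)
    (y : ℕ → Fin n → ℝ) (hy0 : y 0 = 0)
    (hy : ∀ k, y (k + 1) =
      y k - (B (k + 1)).mulVec ((Ai (τ k))ᵀ.mulVec ((Ai (τ k)).mulVec (y k) - bi (τ k)))) :
    ∀ j : ℕ, 0 < j →
      y (j * M) = (Aᵀ * A + (lam / (j : ℝ)) • (Lᵀ * L))⁻¹.mulVec (Aᵀ.mulVec b) := by
  intro j hj
  have hLL : (Lᵀ * L).PosDef := posDef_transpose_mul_self_of_rank_eq_card_s5 (by simpa using hL)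
  have hunit (k : ℕ) : IsUnit (lam • (Lᵀ * L) + ∑ i ∈ range k, (Ai (τ i))ᵀ * Ai (τ i)) :=
    ((hLL.smul hlam).add_posSemidef <|
      posSemidef_sum _ fun i _ => posSemidef_transpose_mul_self _).isUnit
  have hnormal := mulVec_rls_iterate_eq_sum _ _ _ y hunit hy0 (fun k => by rw [hy k, hB]) (j * M)
  rw [sum_range_mul_eq_nsmul_sum τ hτ (fun i => (Ai i)ᵀ * Ai i),
    sum_range_mul_eq_nsmul_sum τ hτ (fun i => (Ai i)ᵀ *ᵥ bi i)] at hnormal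
  simp only [hAi, hbi, sum_blocks_transpose_mul_self hW, sum_blocks_transpose_mulVec hW] at hnormal
  have hj' : (j : ℝ) ≠ 0 := by positivity
  have hscale : lam • (Lᵀ * L) + j • (Aᵀ * A) = (j : ℝ) • (Aᵀ * A + (lam / j) • (Lᵀ * L)) := by
    rw [smul_add, smul_smul, mul_div_cancel₀ _ hj', add_comm, Nat.cast_smul_eq_nsmul]
  rw [hscale, smul_mulVec, ← Nat.cast_smul_eq_nsmul ℝ] at hnormal
  have : Invertible (Aᵀ * A + (lam / j) • (Lᵀ * L)) :=
    (PosDef.posSemidef_add (posSemidef_transpose_mul_self A)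
      (hLL.smul (by positivity))).isUnit.invertible
  exact (inv_mulVec_eq_vec (smul_right_injective _ hj' hnormal).symm).symm

/-- under random cyclic sampling (each epoch is a permutation of the `M`
blocks), the rrls iterate after the `j`-th epoch is the Tikhonov solution with
regularization parameter `λ/j`. -/
theorem rrls_epoch_iterate
    {m n s ℓ M : ℕ} (hM : 0 < M)
    (A : Matrix (Fin m) (Fin n) ℝ) (b : Fin m → ℝ)
    (L : Matrix (Fin s) (Fin n) ℝ) (hL : L.rank = n)
    (W : Fin M → Matrix (Fin m) (Fin ℓ) ℝ)
    (hW : ∑ i, W i * (W i)ᵀ = (1 : Matrix (Fin m) (Fin m) ℝ))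
    (lam : ℝ) (hlam : 0 < lam)
    (τ : ℕ → Fin M)
    (hτ : ∀ j : ℕ, Function.Bijective (fun t : Fin M => τ (j * M + (t : ℕ))))
    (Ai : Fin M → Matrix (Fin ℓ) (Fin n) ℝ) (hAi : ∀ i, Ai i = (W i)ᵀ * A)
    (bi : Fin M → Fin ℓ → ℝ) (hbi : ∀ i, bi i = (W i)ᵀ.mulVec b)
    (B : ℕ → Matrix (Fin n) (Fin n) ℝ)
    (hB : ∀ j, B j = (lam • (Lᵀ * L) + ∑ i ∈ Finset.range j, (Ai (τ i))ᵀ * Ai (τ i))⁻¹)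
    (y : ℕ → Fin n → ℝ) (hy0 : y 0 = 0)
    (hy : ∀ k, y (k + 1) =
      y k - (B (k + 1)).mulVec ((Ai (τ k))ᵀ.mulVec ((Ai (τ k)).mulVec (y k) - bi (τ k)))) :
    ∀ j : ℕ, 0 < j →
      y (j * M) = (Aᵀ * A + (lam / (j : ℝ)) • (Lᵀ * L))⁻¹.mulVec (Aᵀ.mulVec b) :=
  rrls_epoch_iterate_general A b L hL W hW lam hlam τ hτ Ai hAi bi hbi B hB y hy0 hy
end
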